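/- arXiv:1611.04676 — 3 statements merged into one kernel-verified Lean document; each statement's English description precedes it below -/
import Mathlib

section
/- The Goldman Lie algebra of the torus over ℚ is generated as a Lie algebra by the three elements e_{(1,0)}, e_{(0,1)}, and e_{(-1,-1)} + e_{(0,1)} + e_{(0,0)}. -/
noncomputable def gb (x y : (ℤ × ℤ) →₀ ℚ) : (ℤ × ℤ) →₀ ℚ :=
  x.sum fun p a => y.sum fun q b =>
    Finsupp.single (p.1 + q.1, p.2 + q.2) (a * b * ((p.1 * q.2 - p.2 * q.1 : ℤ) : ℚ))

noncomputable def e (p : ℤ × ℤ) : (ℤ × ℤ) →₀ ℚ := Finsupp.single p 1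

/-!
Since `[e p, e q] = (p × q) e (p + q)`, whenever `p × q ≠ 0` a bracket-closed subspace containing
`e p` and `e q` also contains `e (p + q)`. Bracketing the third generator with `e (1, 0)` and
`e (0, 1)` produces `e (0, -1)` and `e (-1, 0)`, hence also `e (0, 0)`. Adding `e (±1, 0)` repeatedly
to `e (0, 1)` sweeps out the line `ℤ × {1}`; adding `e (0, -1)` moves it down to the axis, and from
each `e (i, 0)` with `i ≠ 0` the vectors `e (0, ±1)` sweep out the vertical line `{i} × ℤ`.
The remaining points `(0, j)` are one more bracket away.
-/

-- the algebraic intersection number of the closed curves of classes `p` and `q`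
def cross (p q : ℤ × ℤ) : ℤ := p.1 * q.2 - p.2 * q.1

lemma gb_e (p q : ℤ × ℤ) : gb (e p) (e q) = (cross p q : ℚ) • e (p + q) := by
  unfold gb e
  rw [Finsupp.sum_single_index (by simp), Finsupp.sum_single_index (by simp),
    Finsupp.smul_single, smul_eq_mul, one_mul, one_mul, mul_one]
  rfl

lemma gb_add_right (x y z : (ℤ × ℤ) →₀ ℚ) : gb x (y + z) = gb x y + gb x z := by
  unfold gb
  rw [← Finsupp.sum_add]
  refine Finsupp.sum_congr fun p _ => ?_
  rw [Finsupp.sum_add_index (by intros; simp)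
    (by intros; rw [← Finsupp.single_add]; congr 1; ring)]

lemma cross_add_zsmul_right (w v : ℤ × ℤ) (n : ℤ) : cross (w + n • v) v = cross w v := by
  simp only [cross, Prod.fst_add, Prod.snd_add, Prod.smul_fst, Prod.smul_snd, smul_eq_mul]
  ring

lemma cross_neg_right (p q : ℤ × ℤ) : cross p (-q) = -cross p q := by
  simp only [cross, Prod.fst_neg, Prod.snd_neg]
  ring

lemma eq_top_of_forall_e_mem {P : Submodule ℚ ((ℤ × ℤ) →₀ ℚ)} (h : ∀ p, e p ∈ P) : P = ⊤ := by
  rw [eq_top_iff, ← (Finsupp.basisSingleOne (R := ℚ) (ι := ℤ × ℤ)).span_eq, Submodule.span_le]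
  rintro _ ⟨p, rfl⟩
  simpa [e] using h p

section BracketClosed

variable {P : Submodule ℚ ((ℤ × ℤ) →₀ ℚ)} (hcl : ∀ x ∈ P, ∀ y ∈ P, gb x y ∈ P)
include hcl

lemma e_add_mem {p q : ℤ × ℤ} (hp : e p ∈ P) (hq : e q ∈ P) (hpq : cross p q ≠ 0) :
    e (p + q) ∈ P := by
  have h := P.smul_mem (cross p q : ℚ)⁻¹ (hcl _ hp _ hq)
  rwa [gb_e, smul_smul, inv_mul_cancel₀ (by exact_mod_cast hpq), one_smul] at h

lemma e_add_zsmul_mem {v w : ℤ × ℤ} (hv : e v ∈ P) (hnv : e (-v) ∈ P) (hw : e w ∈ P)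
    (hwv : cross w v ≠ 0) (n : ℤ) : e (w + n • v) ∈ P := by
  induction n using Int.induction_on with
  | zero => simpa using hw
  | succ n ih =>
    convert e_add_mem hcl ih hv (by rwa [cross_add_zsmul_right]) using 2
    rw [add_zsmul, one_zsmul, add_assoc]
  | pred n ih =>
    convert e_add_mem hcl ih hnv (by rwa [cross_neg_right, cross_add_zsmul_right, neg_ne_zero])
      using 2
    rw [sub_zsmul, one_zsmul]
    abel

lemma forall_e_mem (h10 : e (1, 0) ∈ P) (hm10 : e (-1, 0) ∈ P) (h01 : e (0, 1) ∈ P)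
    (h0m1 : e (0, -1) ∈ P) (h00 : e (0, 0) ∈ P) : ∀ p, e p ∈ P := by
  have row_one : ∀ i, e (i, 1) ∈ P := fun i => by
    simpa using e_add_zsmul_mem hcl h10 hm10 h01 (by decide) i
  have column : ∀ i ≠ 0, ∀ j, e (i, j) ∈ P := fun i hi j => by
    have hi0 : e (i, 0) ∈ P := by
      simpa using e_add_mem hcl (row_one i) h0m1 (by simpa [cross] using hi)
    simpa using e_add_zsmul_mem hcl h01 h0m1 hi0 (by simpa [cross] using hi) j
  rintro ⟨i, j⟩
  rcases eq_or_ne i 0 with rfl | hi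
  · rcases eq_or_ne j 0 with rfl | hj
    · exact h00
    · simpa using e_add_mem hcl (column 1 one_ne_zero j) hm10 (by simpa [cross] using hj)
  · exact column i hi j

end BracketClosed

theorem goldman_fg3 (P : Submodule ℚ ((ℤ × ℤ) →₀ ℚ))
    (h1 : e (1, 0) ∈ P) (h2 : e (0, 1) ∈ P)
    (h3 : e (-1, -1) + e (0, 1) + e (0, 0) ∈ P)
    (hcl : ∀ x ∈ P, ∀ y ∈ P, gb x y ∈ P) : P = ⊤ := by
  have h0m1 : e (0, -1) ∈ P := by
    have h11 : e (1, 1) ∈ P := by simpa using e_add_mem hcl h1 h2 (by decide)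
    have h : -e (0, -1) + e (1, 1) ∈ P := by
      simpa [gb_add_right, gb_e, cross] using hcl _ h1 _ h3
    simpa using P.sub_mem h11 h
  have hm10 : e (-1, 0) ∈ P := by
    simpa [gb_add_right, gb_e, cross] using hcl _ h2 _ h3
  have h00 : e (0, 0) ∈ P := by
    have hm1m1 : e (-1, -1) ∈ P := by simpa using e_add_mem hcl h0m1 hm10 (by decide)
    convert P.sub_mem (P.sub_mem h3 hm1m1) h2 using 1
    abel
  exact eq_top_of_forall_e_mem (forall_e_mem hcl h1 hm10 h2 h0m1 h00)
end

section
/- The center of the Goldman Lie algebra of the torus over ℚ is exactly the ℚ-span of e_{(0,0)}: an element x satisfies [x,y] = 0 for all y if and only if x is a scalar multiple of e_{(0,0)}. -/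
lemma gb_single_left (p : ℤ × ℤ) (a : ℚ) (y : (ℤ × ℤ) →₀ ℚ) :
    gb (Finsupp.single p a) y = y.sum fun q b => Finsupp.single (p + q) (a * b * cross p q) := by
  unfold gb
  rw [Finsupp.sum_single_index]
  · rfl
  · simp

lemma gb_e_right (x : (ℤ × ℤ) →₀ ℚ) (q : ℤ × ℤ) :
    gb x (e q) = x.sum fun p a => Finsupp.single (p + q) (a * cross p q) := by
  unfold gb e
  refine Finsupp.sum_congr fun p _ => ?_
  rw [Finsupp.sum_single_index]
  · simp only [mul_one]
    rfl
  · simp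

lemma gb_e_right_apply_add (x : (ℤ × ℤ) →₀ ℚ) (p q : ℤ × ℤ) :
    gb x (e q) (p + q) = x p * cross p q := by
  rw [gb_e_right, Finsupp.sum_apply, Finsupp.sum_eq_single p]
  · simp
  · intro p' _ hp'
    simp [hp']
  · simp

lemma gb_single_zero_left (a : ℚ) (y : (ℤ × ℤ) →₀ ℚ) : gb (Finsupp.single 0 a) y = 0 := by
  simp [gb_single_left, cross]

lemma eq_zero_of_cross_eq_zero {p : ℤ × ℤ} (h₁ : cross p (1, 0) = 0) (h₂ : cross p (0, 1) = 0) :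
    p = 0 := by
  simp only [cross] at h₁ h₂
  ext <;> simp_all

lemma eq_zero_of_apply_ne_zero_of_central {x : (ℤ × ℤ) →₀ ℚ} (hx : ∀ y, gb x y = 0)
    {p : ℤ × ℤ} (hp : x p ≠ 0) : p = 0 := by
  have hcross (q : ℤ × ℤ) : cross p q = 0 := by
    have := gb_e_right_apply_add x p q
    rw [hx, Finsupp.coe_zero, Pi.zero_apply, eq_comm, mul_eq_zero] at this
    exact_mod_cast this.resolve_left hp
  exact eq_zero_of_cross_eq_zero (hcross _) (hcross _)

theorem goldman_center (x : (ℤ × ℤ) →₀ ℚ) :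
    (∀ y, gb x y = 0) ↔ ∃ c : ℚ, x = c • e (0, 0) := by
  simp only [e, Finsupp.smul_single_one]
  constructor
  · intro hx
    refine Finsupp.support_subset_singleton'.mp fun p hp => ?_
    exact Finset.mem_singleton.mpr (eq_zero_of_apply_ne_zero_of_central hx (Finsupp.mem_support_iff.mp hp))
  · rintro ⟨c, rfl⟩
    exact gb_single_zero_left c
end

section
/- In the Goldman Lie algebra of the torus over ℚ, every basis element e_{(i,j)} with (i,j) ≠ (0,0) can be written as a bracket [x, y] of two elements of ℚ[ℤ²]; specifically, if d = gcd(i,j) and xi + yj = d, then e_{(i,j)} = [e_{(i+y,j-x)}, (1/d)·e_{(-y,x)}]. -/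
/-! The bracket `[e_p, e_q] = det(p, q) e_{p+q}` shows that `e_{p+q}` is a bracket as soon as
`det(p, q) ≠ 0`. For `e_{(i,j)}` take `p = (i + y, j - x)` and `q = (-y, x)`: by Bézout,
`det(p, q) = x i + y j = gcd(i, j)`, which is nonzero since `(i, j) ≠ (0, 0)`. -/

theorem gb_single_single (p q : ℤ × ℤ) (a b : ℚ) :
    gb (Finsupp.single p a) (Finsupp.single q b) =
      Finsupp.single (p.1 + q.1, p.2 + q.2) (a * b * ((p.1 * q.2 - p.2 * q.1 : ℤ) : ℚ)) := by
  simp [gb, Finsupp.sum_single_index]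

theorem e_add_eq_gb_of_det_ne_zero (p q : ℤ × ℤ) (hdet : p.1 * q.2 - p.2 * q.1 ≠ 0) :
    e (p.1 + q.1, p.2 + q.2) =
      gb (e p) (((1 : ℚ) / ((p.1 * q.2 - p.2 * q.1 : ℤ) : ℚ)) • e q) := by
  have hdet' : ((p.1 * q.2 - p.2 * q.1 : ℤ) : ℚ) ≠ 0 := by exact_mod_cast hdet
  rw [e, e, e, Finsupp.smul_single, smul_eq_mul, mul_one, gb_single_single, one_mul,
    one_div_mul_cancel hdet']

theorem goldman_basis_bracket (i j x y : ℤ) (hij : (i, j) ≠ (0, 0))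
    (h : x * i + y * j = Int.gcd i j) :
    e (i, j) = gb (e (i + y, j - x)) (((1 : ℚ) / (Int.gcd i j : ℤ)) • e (-y, x)) ∧
    ∃ u v : (ℤ × ℤ) →₀ ℚ, e (i, j) = gb u v := by
  have hgcd : (Int.gcd i j : ℤ) ≠ 0 := by
    rw [Int.natCast_ne_zero, Ne, Int.gcd_eq_zero_iff]
    rintro ⟨rfl, rfl⟩
    exact hij rfl
  have hdet : (i + y) * x - (j - x) * -y = Int.gcd i j := by
    rw [← h]; ring
  have key := e_add_eq_gb_of_det_ne_zero (i + y, j - x) (-y, x) (hdet ▸ hgcd)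
  simp only [hdet, add_neg_cancel_right, sub_add_cancel] at key
  exact ⟨key, _, _, key⟩
end
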